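/- Under the Interacting Urns Design with the asymptotically vanishing borrowing update mechanism, for every fixed stratum h ∈ {1,…,H} and treatment j ∈ {1,…,J}: if N_{j,h,n} → ∞ almost surely, then P_{j,h,n} → θ_{j,h} almost surely as n → ∞. -/

import Mathlib

/-!
Fix a cell `(j, h)` and let `X i = 1{Z i = h, δ i = j} (Y i - θ j h)`. Given the past and the
current covariate and treatment, `Y i` has mean `θ j h` on the cell, so `X i` is a martingale
difference, and so is `X i / (N i + 1)`, where `N i` counts the earlier visits of the cell. The
squares of these increments sum to at most a constant times `∑ 1 / k ^ 2` over the visits, so the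
martingale `∑ X i / (N i + 1)` is bounded in `L²` and converges almost surely. Kronecker's lemma
then gives `(S n - θ j h N n) / N n → 0` wherever `N n → ∞`. Finally the borrowed term
`θ̂ ψ(N_h̄)` of the urn proportion stays bounded by `ψmax`, so it is swamped by `N n`.
-/

open MeasureTheory ProbabilityTheory Filter Finset Asymptotics
open scoped Topology

theorem sum_div_partialSum_add_one_sq_le_two {w : ℕ → ℝ} (hw : ∀ i, w i ∈ Set.Icc 0 1)
    (n : ℕ) : ∑ i ∈ range n, w i / (∑ k ∈ range i, w k + 1) ^ 2 ≤ 2 := by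
  set W : ℕ → ℝ := fun i => ∑ k ∈ range i, w k + 1 with hW_def
  have hW : ∀ i, 1 ≤ W i := fun i =>
    le_add_of_nonneg_left (sum_nonneg fun k _ => (hw k).1)
  -- telescoping, since `w / W² ≤ 2 w / (W (W + w))` as `W + w ≤ 2 W`
  have step : ∀ i, w i / W i ^ 2 ≤ 2 * ((W i)⁻¹ - (W (i + 1))⁻¹) := by
    intro i
    have hsucc : W (i + 1) = W i + w i := by simp only [hW_def, sum_range_succ]; ring
    have := hW i
    obtain ⟨hw0, hw1⟩ := hw i
    rw [hsucc, inv_sub_inv (by positivity) (by positivity), div_le_iff₀ (by positivity)]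
    field_simp
    nlinarith [mul_nonneg hw0 (by linarith : (0 : ℝ) ≤ W i - w i)]
  calc ∑ i ∈ range n, w i / W i ^ 2
      ≤ ∑ i ∈ range n, 2 * ((W i)⁻¹ - (W (i + 1))⁻¹) := sum_le_sum fun i _ => step i
    _ = 2 * ((W 0)⁻¹ - (W n)⁻¹) := by rw [← mul_sum, sum_range_sub' (fun i => (W i)⁻¹)]
    _ ≤ 2 := by
      have := hW n
      simp only [hW_def, range_zero, sum_empty, zero_add, inv_one]
      nlinarith [inv_pos.2 (by linarith : (0:ℝ) < W n)]

theorem sum_range_mul_eq_by_parts (b g : ℕ → ℝ) (l : ℝ) (n : ℕ) :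
    ∑ i ∈ range n, b i * g i =
      b n * (∑ i ∈ range n, g i - l) + b 0 * l
        - ∑ i ∈ range n, (b (i + 1) - b i) * (∑ k ∈ range (i + 1), g k - l) := by
  induction n with
  | zero => simp
  | succ n ih =>
    rw [sum_range_succ, ih, sum_range_succ (fun i => (b (i + 1) - b i) * _) n,
      sum_range_succ g n]
    ring

/-- Kronecker's lemma. -/
theorem tendsto_sum_mul_div_of_tendsto_sum {b g : ℕ → ℝ} {l : ℝ} (hb : Monotone b)
    (hb_top : Tendsto b atTop atTop)
    (hg : Tendsto (fun n => ∑ i ∈ range n, g i) atTop (𝓝 l)) :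
    Tendsto (fun n => (∑ i ∈ range n, b i * g i) / b n) atTop (𝓝 0) := by
  set R : ℕ → ℝ := fun n => ∑ i ∈ range n, g i - l
  have hR : R =o[atTop] fun _ => (1 : ℝ) := (isLittleO_one_iff ℝ).2 (by simpa using hg.sub_const l)
  have hconst : (fun _ => (1 : ℝ)) =o[atTop] b :=
    (isLittleO_one_left_iff ℝ).2 (tendsto_norm_atTop_atTop.comp hb_top)
  have hincr : (fun n => ∑ i ∈ range n, (b (i + 1) - b i)) =O[atTop] b := by
    simp_rw [sum_range_sub b]
    exact (isBigO_refl b atTop).sub ((isBigO_const_one ℝ (b 0) atTop).trans hconst.isBigO)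
  have h1 : (fun n => b n * R n) =o[atTop] b := by
    simpa using (isBigO_refl b atTop).mul_isLittleO hR
  have h2 : (fun _ => b 0 * l) =o[atTop] b := (isBigO_const_one ℝ _ atTop).trans_isLittleO hconst
  have h3 : (fun n => ∑ i ∈ range n, (b (i + 1) - b i) * R (i + 1)) =o[atTop] b := by
    refine IsLittleO.trans_isBigO ?_ hincr
    refine IsLittleO.sum_range ?_ (fun i => sub_nonneg.2 (hb i.le_succ)) ?_
    · simpa using (isBigO_refl (fun i => b (i + 1) - b i) atTop).mul_isLittleO
        (hR.comp_tendsto (tendsto_add_atTop_nat 1))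
    · simp_rw [sum_range_sub b]
      exact tendsto_atTop_add_const_right _ _ hb_top
  exact ((h1.add h2).sub h3).tendsto_div_nhds_zero.congr fun n => by
    rw [sum_range_mul_eq_by_parts b g l n]

theorem tendsto_add_mul_div_add_of_tendsto_div {s n r c : ℕ → ℝ} {θ R K : ℝ}
    (hn : Tendsto n atTop atTop) (hs : Tendsto (fun k => s k / n k) atTop (𝓝 θ))
    (hr : ∀ k, |r k| ≤ R) (hc : ∀ k, |c k| ≤ K) :
    Tendsto (fun k => (s k + r k * c k) / (n k + c k)) atTop (𝓝 θ) := by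
  have bdd_div : ∀ (f : ℕ → ℝ) (M : ℝ), (∀ k, |f k| ≤ M) →
      Tendsto (fun k => f k / n k) atTop (𝓝 0) := fun f M hf => by
    simpa [div_eq_mul_inv, mul_comm] using
      (tendsto_inv_atTop_zero.comp hn).zero_mul_isBoundedUnder_le
        (isBoundedUnder_of ⟨M, fun k => (Real.norm_eq_abs (f k)).trans_le (hf k)⟩)
  have hrc : ∀ k, |r k * c k| ≤ R * K := fun k => by
    rw [abs_mul]; exact mul_le_mul (hr k) (hc k) (abs_nonneg _) ((abs_nonneg _).trans (hr 0))
  have := (hs.add (bdd_div _ _ hrc)).div (tendsto_const_nhds.add (bdd_div c K hc))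
    (by norm_num : (1:ℝ) + 0 ≠ 0)
  rw [add_zero, add_zero, div_one] at this
  refine this.congr' ?_
  filter_upwards [hn.eventually_gt_atTop 0] with k hk
  show (s k / n k + r k * c k / n k) / (1 + c k / n k) = _
  rw [← add_div, one_add_div hk.ne', div_div_div_cancel_right₀ hk.ne']

theorem tendsto_sum_div_sum_of_tendsto_sum_div {w x : ℕ → ℝ} (hw : ∀ i, 0 ≤ w i)
    (hW : Tendsto (fun n => ∑ i ∈ range n, w i) atTop atTop) {c : ℝ}
    (hx : Tendsto (fun n => ∑ i ∈ range n, x i / (∑ k ∈ range i, w k + 1)) atTop (𝓝 c)) :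
    Tendsto (fun n => (∑ i ∈ range n, x i) / ∑ i ∈ range n, w i) atTop (𝓝 0) := by
  set W : ℕ → ℝ := fun n => ∑ i ∈ range n, w i
  have hW1 : ∀ n, W n + 1 ≠ 0 := fun n => by
    have : 0 ≤ W n := sum_nonneg fun i _ => hw i
    positivity
  have hkr := tendsto_sum_mul_div_of_tendsto_sum (b := fun n => W n + 1)
    (fun m n hmn => by
      simp only [W]; gcongr
      exact fun i _ _ => hw i)
    (tendsto_atTop_add_const_right _ 1 hW) hx
  have hratio : Tendsto (fun n => (W n + 1) / W n) atTop (𝓝 1) := by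
    have := (tendsto_inv_atTop_zero.comp hW).const_add 1
    rw [add_zero] at this
    refine this.congr' ?_
    filter_upwards [hW.eventually_gt_atTop 0] with n hn
    simp [add_div, div_self hn.ne']
  have := hkr.mul hratio
  rw [zero_mul] at this
  refine this.congr' ?_
  filter_upwards [hW.eventually_gt_atTop 0] with n hn
  rw [sum_congr rfl fun i _ => mul_div_cancel₀ (x i) (hW1 i), div_mul_div_cancel₀ (hW1 n)]

section Martingale

variable {Ω : Type*} {m0 : MeasurableSpace Ω} {μ : Measure Ω}

theorem condExp_mul_eq_zero_of_condExp_eq_zero {m : MeasurableSpace Ω} {f g : Ω → ℝ}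
    (hf : StronglyMeasurable[m] f) (hfg : Integrable (f * g) μ) (hg : Integrable g μ)
    (hg0 : μ[g | m] =ᵐ[μ] 0) : μ[f * g | m] =ᵐ[μ] 0 := by
  filter_upwards [condExp_mul_of_stronglyMeasurable_left hf hfg hg, hg0] with ω h1 h2
  simp [h1, h2]

theorem integral_sq_sum_eq_sum_integral_sq [IsFiniteMeasure μ] {ℱ : Filtration ℕ m0}
    {G : ℕ → Ω → ℝ} (hG : ∀ i, StronglyMeasurable[ℱ (i + 1)] (G i))
    (hL2 : ∀ i, MemLp (G i) 2 μ) (hGcond : ∀ i, μ[G i | ℱ i] =ᵐ[μ] 0) (n : ℕ) :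
    ∫ ω, (∑ i ∈ range n, G i ω) ^ 2 ∂μ = ∑ i ∈ range n, ∫ ω, G i ω ^ 2 ∂μ := by
  induction n with
  | zero => simp
  | succ n ih =>
    set L : Ω → ℝ := fun ω => ∑ i ∈ range n, G i ω
    have hL : StronglyMeasurable[ℱ n] L := Finset.stronglyMeasurable_fun_sum _ fun i hi =>
      (hG i).mono (ℱ.mono (mem_range.1 hi))
    have hLL2 : MemLp L 2 μ := memLp_finsetSum _ fun i _ => hL2 i
    have hLG : Integrable (L * G n) μ := hLL2.integrable_mul (hL2 n)
    have horth : ∫ ω, (L * G n) ω ∂μ = 0 := by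
      rw [← integral_condExp (ℱ.le n), integral_congr_ae
        (condExp_mul_eq_zero_of_condExp_eq_zero hL hLG ((hL2 n).integrable one_le_two) (hGcond n))]
      simp
    have hsplit : (fun ω => (∑ i ∈ range (n + 1), G i ω) ^ 2) =
        fun ω => L ω ^ 2 + 2 * (L * G n) ω + G n ω ^ 2 := by
      funext ω; simp only [sum_range_succ, L, Pi.mul_apply]; ring
    rw [hsplit, integral_add (f := fun ω => L ω ^ 2 + 2 * (L * G n) ω)
      (hLL2.integrable_sq.add (hLG.const_mul 2)) (hL2 n).integrable_sq,
      integral_add (f := fun ω => L ω ^ 2) hLL2.integrable_sq (hLG.const_mul 2),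
      integral_const_mul, horth, ih, sum_range_succ]
    ring

theorem eLpNorm_one_le_of_integral_sq_le [IsFiniteMeasure μ] {f : Ω → ℝ} (hf : MemLp f 2 μ)
    {A : ℝ} (hA : ∫ ω, f ω ^ 2 ∂μ ≤ A) : eLpNorm f 1 μ ≤ ENNReal.ofReal (A + μ.real Set.univ) := by
  rw [eLpNorm_one_eq_lintegral_enorm,
    ← ofReal_integral_norm_eq_lintegral_enorm (hf.integrable one_le_two)]
  refine ENNReal.ofReal_le_ofReal ?_
  calc ∫ ω, ‖f ω‖ ∂μ ≤ ∫ ω, (f ω ^ 2 + 1) ∂μ := by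
        refine integral_mono (hf.integrable one_le_two).norm
          (hf.integrable_sq.add (integrable_const 1)) fun ω => ?_
        rw [Real.norm_eq_abs]
        nlinarith [sq_abs (f ω), sq_nonneg (|f ω| - 1)]
    _ ≤ A + μ.real Set.univ := by
        rw [integral_add hf.integrable_sq (integrable_const 1)]
        simpa using hA

theorem ae_exists_tendsto_sum_of_condExp_eq_zero [IsFiniteMeasure μ] {ℱ : Filtration ℕ m0}
    {G : ℕ → Ω → ℝ} {C : ℝ} (hG : ∀ i, StronglyMeasurable[ℱ (i + 1)] (G i))
    (hGcond : ∀ i, μ[G i | ℱ i] =ᵐ[μ] 0) (hsq : ∀ n ω, ∑ i ∈ range n, G i ω ^ 2 ≤ C) :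
    ∀ᵐ ω ∂μ, ∃ c, Tendsto (fun n => ∑ i ∈ range n, G i ω) atTop (𝓝 c) := by
  have hL2 : ∀ i, MemLp (G i) 2 μ := fun i =>
    (memLp_top_of_bound ((hG i).mono (ℱ.le _)).aestronglyMeasurable √C
      (ae_of_all _ fun ω => Real.abs_le_sqrt <| (single_le_sum (fun k _ => sq_nonneg (G k ω))
        (mem_range.2 i.lt_succ_self)).trans (hsq (i + 1) ω))).mono_exponent le_top
  set L : ℕ → Ω → ℝ := fun n ω => ∑ i ∈ range n, G i ω
  have hadp : StronglyAdapted ℱ L := fun n => Finset.stronglyMeasurable_fun_sum _ fun i hi =>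
    (hG i).mono (ℱ.mono (mem_range.1 hi))
  have hLL2 : ∀ n, MemLp (L n) 2 μ := fun n => memLp_finsetSum _ fun i _ => hL2 i
  have hmart : Martingale L ℱ μ := by
    refine martingale_of_condExp_sub_eq_zero_nat hadp (fun n => (hLL2 n).integrable one_le_two)
      fun i => ?_
    have : L (i + 1) - L i = G i := by funext ω; simp [L, sum_range_succ]
    rw [this]; exact hGcond i
  have hsq_int : ∀ n, ∫ ω, L n ω ^ 2 ∂μ ≤ μ.real Set.univ * C := fun n => by
    rw [integral_sq_sum_eq_sum_integral_sq hG hL2 hGcond,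
      ← integral_finsetSum _ fun i _ => (hL2 i).integrable_sq, ← smul_eq_mul, ← integral_const]
    exact integral_mono (integrable_finsetSum _ fun i _ => (hL2 i).integrable_sq)
      (integrable_const C) (hsq n)
  exact hmart.submartingale.exists_ae_tendsto_of_bdd
    (R := (μ.real Set.univ * C + μ.real Set.univ).toNNReal)
    fun n => eLpNorm_one_le_of_integral_sq_le (hLL2 n) (hsq_int n)

end Martingale

section Subsample

variable {Ω : Type*} {m0 : MeasurableSpace Ω} {μ : Measure Ω} [IsFiniteMeasure μ]

theorem condExp_indicator_sub_eq_zero {m m' : MeasurableSpace Ω} (hm : m ≤ m') (hm' : m' ≤ m0)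
    {Y : Ω → ℝ} {E : Set Ω} {θ : ℝ} (hE : MeasurableSet[m'] E) (hY : Integrable Y μ)
    (hYθ : ∀ᵐ ω ∂μ, ω ∈ E → μ[Y | m'] ω = θ) :
    μ[E.indicator (fun ω => Y ω - θ) | m] =ᵐ[μ] 0 := by
  have hY' : Integrable (fun ω => Y ω - θ) μ := hY.sub (integrable_const θ)
  have hzero : μ[E.indicator (fun ω => Y ω - θ) | m'] =ᵐ[μ] 0 := by
    filter_upwards [condExp_indicator hY' hE, condExp_sub hY (integrable_const θ) m', hYθ]
      with ω hind hsub hω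
    rw [hind]
    by_cases hωE : ω ∈ E
    · rw [Set.indicator_of_mem hωE]
      change μ[Y - fun _ => θ | m'] ω = 0
      rw [hsub, Pi.sub_apply, condExp_const hm', hω hωE, sub_self]
    · simp [Set.indicator_of_notMem hωE]
  calc μ[E.indicator (fun ω => Y ω - θ) | m]
      =ᵐ[μ] μ[μ[E.indicator (fun ω => Y ω - θ) | m'] | m] :=
        (condExp_condExp_of_le hm hm').symm
    _ =ᵐ[μ] μ[(0 : Ω → ℝ) | m] := condExp_congr_ae hzero
    _ = 0 := condExp_zero

theorem ae_exists_tendsto_sum_div_partialSum_add_one {ℱ : Filtration ℕ m0} {w X : ℕ → Ω → ℝ}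
    {D : ℝ} (hw : ∀ i, StronglyMeasurable[ℱ (i + 1)] (w i)) (hw01 : ∀ i ω, w i ω ∈ Set.Icc 0 1)
    (hX : ∀ i, StronglyMeasurable[ℱ (i + 1)] (X i)) (hXint : ∀ i, Integrable (X i) μ)
    (hXw : ∀ i ω, |X i ω| ≤ D * w i ω) (hXcond : ∀ i, μ[X i | ℱ i] =ᵐ[μ] 0) :
    ∀ᵐ ω ∂μ, ∃ c, Tendsto (fun n => ∑ i ∈ range n, X i ω / (∑ k ∈ range i, w k ω + 1))
      atTop (𝓝 c) := by
  set G : ℕ → Ω → ℝ := fun i ω => (∑ k ∈ range i, w k ω + 1)⁻¹ * X i ω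
  have hN : ∀ i ω, 1 ≤ ∑ k ∈ range i, w k ω + 1 := fun i ω =>
    le_add_of_nonneg_left (sum_nonneg fun k _ => (hw01 k ω).1)
  have hcount : ∀ n, StronglyMeasurable[ℱ n] fun ω => (∑ k ∈ range n, w k ω + 1)⁻¹ := fun n =>
    ((Finset.measurable_sum _ fun k hk => (hw k).measurable.mono (ℱ.mono (mem_range.1 hk))
      le_rfl).add_const 1).inv.stronglyMeasurable
  have hG : ∀ i, StronglyMeasurable[ℱ (i + 1)] (G i) := fun i =>
    ((hcount i).mono (ℱ.mono i.le_succ)).mul (hX i)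
  have hGcond : ∀ i, μ[G i | ℱ i] =ᵐ[μ] 0 := fun i =>
    condExp_mul_eq_zero_of_condExp_eq_zero (hcount i)
      ((hXint i).bdd_mul ((hcount i).mono (ℱ.le i)).aestronglyMeasurable (ae_of_all _ fun ω =>
        (Real.norm_of_nonneg (inv_nonneg.2 (zero_le_one.trans (hN i ω)))).trans_le
          (inv_le_one_of_one_le₀ (hN i ω)))) (hXint i) (hXcond i)
  have hsq : ∀ n ω, ∑ i ∈ range n, G i ω ^ 2 ≤ D ^ 2 * 2 := fun n ω => calc
    ∑ i ∈ range n, G i ω ^ 2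
        ≤ ∑ i ∈ range n, D ^ 2 * (w i ω / (∑ k ∈ range i, w k ω + 1) ^ 2) :=
      sum_le_sum fun i _ => by
        obtain ⟨hw0, hw1⟩ := hw01 i ω
        have hXsq : X i ω ^ 2 ≤ D ^ 2 * w i ω := calc
          X i ω ^ 2 ≤ (D * w i ω) ^ 2 := by
            rw [← sq_abs]; exact pow_le_pow_left₀ (abs_nonneg _) (hXw i ω) 2
          _ = D ^ 2 * (w i ω * w i ω) := by ring
          _ ≤ D ^ 2 * w i ω :=
            mul_le_mul_of_nonneg_left (mul_le_of_le_one_left hw0 hw1) (sq_nonneg D)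
        rw [mul_pow, inv_pow, inv_mul_eq_div, mul_div_assoc']
        exact div_le_div_of_nonneg_right hXsq (by positivity)
    _ ≤ D ^ 2 * 2 := by
      rw [← mul_sum]
      exact mul_le_mul_of_nonneg_left (sum_div_partialSum_add_one_sq_le_two (hw01 · ω) n)
        (sq_nonneg D)
  filter_upwards [ae_exists_tendsto_sum_of_condExp_eq_zero hG hGcond hsq] with ω hω
  simpa only [G, inv_mul_eq_div] using hω

theorem ae_tendsto_sum_indicator_div_count (ℱ : Filtration ℕ m0)
    {𝒢 : ℕ → MeasurableSpace Ω} (hℱ𝒢 : ∀ i, ℱ i ≤ 𝒢 i) (h𝒢ℱ : ∀ i, 𝒢 i ≤ ℱ (i + 1))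
    {E : ℕ → Set Ω} (hE : ∀ i, MeasurableSet[𝒢 i] (E i))
    {Y : ℕ → Ω → ℝ} (hY : ∀ i, StronglyMeasurable[ℱ (i + 1)] (Y i)) {B θ : ℝ}
    (hYB : ∀ i ω, |Y i ω| ≤ B) (hYcond : ∀ i, ∀ᵐ ω ∂μ, ω ∈ E i → μ[Y i | 𝒢 i] ω = θ) :
    ∀ᵐ ω ∂μ, Tendsto (fun n => ∑ i ∈ range n, (E i).indicator (1 : Ω → ℝ) ω) atTop atTop →
      Tendsto (fun n => (∑ i ∈ range n, (E i).indicator (Y i) ω) /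
        ∑ i ∈ range n, (E i).indicator (1 : Ω → ℝ) ω) atTop (𝓝 θ) := by
  set w : ℕ → Ω → ℝ := fun i => (E i).indicator 1
  set X : ℕ → Ω → ℝ := fun i => (E i).indicator fun ω => Y i ω - θ
  have hE' : ∀ i, MeasurableSet[ℱ (i + 1)] (E i) := fun i => h𝒢ℱ i _ (hE i)
  have hYint : ∀ i, Integrable (Y i) μ := fun i =>
    Integrable.of_bound ((hY i).mono (ℱ.le _)).aestronglyMeasurable B
      (ae_of_all _ fun ω => (Real.norm_eq_abs _).trans_le (hYB i ω))
  have hw01 : ∀ i ω, w i ω ∈ Set.Icc 0 1 := fun i ω => by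
    by_cases hω : ω ∈ E i <;> simp [w, hω]
  have hXw : ∀ i ω, |X i ω| ≤ (|B| + |θ|) * w i ω := fun i ω => by
    by_cases hω : ω ∈ E i
    · simpa [X, w, hω] using (abs_sub _ _).trans (by linarith [hYB i ω, le_abs_self B])
    · simp [X, w, hω]
  have hmart := ae_exists_tendsto_sum_div_partialSum_add_one (μ := μ) (ℱ := ℱ)
    (fun i => stronglyMeasurable_const.indicator (hE' i)) hw01
    (fun i => ((hY i).sub stronglyMeasurable_const).indicator (hE' i))
    (fun i => ((hYint i).sub (integrable_const θ)).indicator (ℱ.le _ _ (hE' i))) hXw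
    (fun i => condExp_indicator_sub_eq_zero (hℱ𝒢 i) ((h𝒢ℱ i).trans (ℱ.le _)) (hE i) (hYint i)
      (hYcond i))
  filter_upwards [hmart] with ω ⟨c, hc⟩ hcount
  have := (tendsto_sum_div_sum_of_tendsto_sum_div (x := fun i => X i ω) (hw01 · ω |>.1) hcount
    hc).const_add θ
  rw [add_zero] at this
  refine this.congr' ?_
  filter_upwards [hcount.eventually_gt_atTop 0] with n hn
  have hXsum : ∑ i ∈ range n, X i ω =
      ∑ i ∈ range n, (E i).indicator (Y i) ω - θ * ∑ i ∈ range n, w i ω := by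
    rw [mul_sum, ← sum_sub_distrib]
    refine sum_congr rfl fun i _ => ?_
    by_cases hω : ω ∈ E i <;> simp [X, w, hω]
  rw [hXsum, sub_div, mul_div_cancel_right₀ _ hn.ne']
  ring

end Subsample

section Trial

variable {Ω : Type*} {m0 : MeasurableSpace Ω}

/-- Time `n` knows `m 0, …, m (n - 1)`: the `i`-th observation is revealed at time `i + 1`. -/
def MeasureTheory.Filtration.ofRange (m : ℕ → MeasurableSpace Ω) (hm : ∀ i, m i ≤ m0) :
    Filtration ℕ m0 where
  seq n := ⨆ i ∈ range n, m i
  mono' _ _ hkn := biSup_mono fun _ hi => mem_range.2 ((mem_range.1 hi).trans_le hkn)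
  le' _ := iSup₂_le fun i _ => hm i

theorem MeasureTheory.Filtration.measurable_ofRange {β : Type*} [MeasurableSpace β]
    (m : ℕ → MeasurableSpace Ω) (hm : ∀ i, m i ≤ m0) {f : Ω → β} {i : ℕ}
    (hf : MeasurableSpace.comap f ⊤ ≤ m i) : Measurable[Filtration.ofRange m hm (i + 1)] f :=
  .of_comap_le <| (MeasurableSpace.comap_mono le_top).trans <|
    hf.trans (le_iSup₂ (f := fun k (_ : k ∈ range (i + 1)) => m k) i (self_mem_range_succ i))

theorem comap_top_le_of_countable_range {β : Type*} [MeasurableSpace β]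
    [MeasurableSingletonClass β] {m : MeasurableSpace Ω} {f : Ω → β} (hf : Measurable[m] f)
    (hrange : (Set.range f).Countable) : MeasurableSpace.comap f ⊤ ≤ m := by
  rintro _ ⟨A, -, rfl⟩
  rw [← Set.preimage_inter_range]
  exact hf (hrange.mono Set.inter_subset_right).measurableSet

variable {μ : Measure Ω} [IsFiniteMeasure μ] {α β : Type*} [MeasurableSpace α]
  [MeasurableSingletonClass α] [Countable α] [MeasurableSpace β] [MeasurableSingletonClass β]
  [Countable β] [DecidableEq α] [DecidableEq β]

theorem ae_tendsto_cell_mean (ℱ : Filtration ℕ m0) {Z : ℕ → Ω → α} {δ : ℕ → Ω → β}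
    {Y : ℕ → Ω → ℝ} (hZ : ∀ i, Measurable[ℱ (i + 1)] (Z i))
    (hδ : ∀ i, Measurable[ℱ (i + 1)] (δ i)) (hY : ∀ i, Measurable[ℱ (i + 1)] (Y i)) {B : ℝ}
    (hYB : ∀ i ω, |Y i ω| ≤ B) {θ : β → α → ℝ}
    (hYcond : ∀ i, μ[Y i | ℱ i ⊔ MeasurableSpace.comap (fun ω => (Z i ω, δ i ω)) ⊤]
      =ᵐ[μ] fun ω => θ (δ i ω) (Z i ω)) (j : β) (h : α) :
    ∀ᵐ ω ∂μ, Tendsto (fun n => ∑ i ∈ range n, if Z i ω = h ∧ δ i ω = j then (1 : ℝ) else 0)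
        atTop atTop →
      Tendsto (fun n => (∑ i ∈ range n, if Z i ω = h ∧ δ i ω = j then Y i ω else 0) /
        ∑ i ∈ range n, if Z i ω = h ∧ δ i ω = j then (1 : ℝ) else 0) atTop (𝓝 (θ j h)) := by
  have hcell : ∀ i, {ω | Z i ω = h ∧ δ i ω = j} = (fun ω => (Z i ω, δ i ω)) ⁻¹' {(h, j)} :=
    fun i => by ext; simp [Prod.ext_iff]
  have := ae_tendsto_sum_indicator_div_count (μ := μ) ℱ
    (𝒢 := fun i => ℱ i ⊔ MeasurableSpace.comap (fun ω => (Z i ω, δ i ω)) ⊤) (fun i => le_sup_left)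
    (fun i => sup_le (ℱ.mono i.le_succ)
      (comap_top_le_of_countable_range ((hZ i).prodMk (hδ i)) (Set.to_countable _)))
    (E := fun i => {ω | Z i ω = h ∧ δ i ω = j})
    (fun i => le_sup_right (a := ℱ i) _ ⟨{(h, j)}, trivial, (hcell i).symm⟩)
    (fun i => (hY i).stronglyMeasurable) hYB
    (fun i => by filter_upwards [hYcond i] with ω hω hωE; rw [hω, hωE.1, hωE.2])
  simpa only [Set.indicator_apply, Set.mem_ofPred_eq, Pi.one_apply] using this

end Trial

section Urn

variable {ι : Type*} [Fintype ι] [DecidableEq ι]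

/-- The urn proportion `P_{j,h,n}` for `S = S_{j,·,n}` and `N = N_{j,·,n}`; `x / 0 = 0` gives the
paper's convention `θ̂_{j,h̄,n} = 0` when `N_{j,h̄,n} = 0`. -/
noncomputable def urnProportion (ψ : ℝ → ℝ) (S N : ι → ℝ) (h : ι) : ℝ :=
  if N h + ψ (∑ k ∈ univ.erase h, N k) = 0 then 1 / 2
  else (S h + ((∑ k ∈ univ.erase h, S k) / (∑ k ∈ univ.erase h, N k)) *
    ψ (∑ k ∈ univ.erase h, N k)) / (N h + ψ (∑ k ∈ univ.erase h, N k))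

theorem tendsto_urnProportion {S N : ℕ → ι → ℝ} {ψ : ℝ → ℝ} {K θ : ℝ} {h : ι}
    (hψ : ∀ x, 0 ≤ x → 0 ≤ ψ x ∧ ψ x ≤ K) (hSN : ∀ n k, 0 ≤ S n k ∧ S n k ≤ N n k)
    (hN : Tendsto (fun n => N n h) atTop atTop)
    (hratio : Tendsto (fun n => S n h / N n h) atTop (𝓝 θ)) :
    Tendsto (fun n => urnProportion ψ (S n) (N n) h) atTop (𝓝 θ) := by
  have hrest : ∀ n, 0 ≤ ∑ k ∈ univ.erase h, N n k := fun n =>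
    sum_nonneg fun k _ => (hSN n k).1.trans (hSN n k).2
  have hψrest : ∀ n, |ψ (∑ k ∈ univ.erase h, N n k)| ≤ K := fun n => by
    obtain ⟨h0, hK⟩ := hψ _ (hrest n)
    rwa [abs_of_nonneg h0]
  have hborrow : ∀ n, |(∑ k ∈ univ.erase h, S n k) / ∑ k ∈ univ.erase h, N n k| ≤ 1 := fun n => by
    rw [abs_of_nonneg (div_nonneg (sum_nonneg fun k _ => (hSN n k).1) (hrest n))]
    exact div_le_one_of_le₀ (sum_le_sum fun k _ => (hSN n k).2) (hrest n)
  refine (tendsto_add_mul_div_add_of_tendsto_div hN hratio hborrow hψrest).congr' ?_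
  filter_upwards [hN.eventually_gt_atTop 0] with n hn
  rw [urnProportion, if_neg (hn.trans_le (le_add_of_nonneg_right (hψ _ (hrest n)).1)).ne']

end Urn

theorem stmt9_general
    {Ω : Type*} [MeasurableSpace Ω] (μ : Measure Ω) [IsProbabilityMeasure μ]
    (H J : ℕ)
    (Z : ℕ → Ω → Fin H) (δ : ℕ → Ω → Fin J) (Y : ℕ → Ω → ℝ)
    (hZmeas : ∀ i, Measurable (Z i)) (hδmeas : ∀ i, Measurable (δ i))
    (hYmeas : ∀ i, Measurable (Y i))
    (hY01 : ∀ i ω, Y i ω = 0 ∨ Y i ω = 1)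
    (𝓕 : ℕ → MeasurableSpace Ω)
    (h𝓕 : ∀ n, 𝓕 n = ⨆ i ∈ Finset.range n,
      (MeasurableSpace.comap (Z i) ⊤ ⊔ MeasurableSpace.comap (δ i) ⊤ ⊔ MeasurableSpace.comap (Y i) ⊤))
    (θ : Fin J → Fin H → ℝ)
    (hYcond : ∀ i, μ[Y i | 𝓕 i ⊔ MeasurableSpace.comap (fun ω => (Z i ω, δ i ω)) ⊤]
        =ᵐ[μ] fun ω => θ (δ i ω) (Z i ω))
    (S N : Fin J → Fin H → ℕ → Ω → ℝ)
    (hS : ∀ j h n ω, S j h n ω = ∑ i ∈ Finset.range n, if Z i ω = h ∧ δ i ω = j then Y i ω else 0)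
    (hN : ∀ j h n ω, N j h n ω = ∑ i ∈ Finset.range n, if Z i ω = h ∧ δ i ω = j then 1 else 0)
    (ψ : ℝ → ℝ) (ψmax : ℝ)
    (hψ0 : ψ 0 = 0) (hψpos : ∀ x : ℝ, 0 < x → 0 < ψ x ∧ ψ x ≤ ψmax)
    (P : Fin J → Fin H → ℕ → Ω → ℝ)
    (hP : ∀ j h n ω,
      P j h n ω =
        if N j h n ω + ψ (∑ k ∈ Finset.univ.erase h, N j k n ω) = 0 then 1/2
        else (S j h n ω +
            ((∑ k ∈ Finset.univ.erase h, S j k n ω) / (∑ k ∈ Finset.univ.erase h, N j k n ω)) *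
              ψ (∑ k ∈ Finset.univ.erase h, N j k n ω)) /
          (N j h n ω + ψ (∑ k ∈ Finset.univ.erase h, N j k n ω)))
    :
    ∀ (j : Fin J) (h : Fin H),
      (∀ᵐ ω ∂μ, Tendsto (fun n => N j h n ω) atTop atTop) →
      ∀ᵐ ω ∂μ, Tendsto (fun n => P j h n ω) atTop (nhds (θ j h)) := by
  intro j h hNae
  have hYrange : ∀ i, (Set.range (Y i)).Countable := fun i =>
    ((Set.countable_singleton 1).insert 0).mono (by rintro _ ⟨ω, rfl⟩; simpa using hY01 i ω)
  set gen : ℕ → MeasurableSpace Ω := fun i => MeasurableSpace.comap (Z i) ⊤ ⊔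
    MeasurableSpace.comap (δ i) ⊤ ⊔ MeasurableSpace.comap (Y i) ⊤
  have hgen : ∀ i, gen i ≤ ‹MeasurableSpace Ω› := fun i => sup_le (sup_le
    (comap_top_le_of_countable_range (hZmeas i) (Set.to_countable _))
    (comap_top_le_of_countable_range (hδmeas i) (Set.to_countable _)))
    (comap_top_le_of_countable_range (hYmeas i) (hYrange i))
  obtain rfl : 𝓕 = Filtration.ofRange gen hgen := funext h𝓕
  have hcell_mean := ae_tendsto_cell_mean (μ := μ) (Filtration.ofRange gen hgen)
    (fun i => Filtration.measurable_ofRange gen hgen (le_sup_left.trans le_sup_left))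
    (fun i => Filtration.measurable_ofRange gen hgen (le_sup_right.trans le_sup_left))
    (fun i => Filtration.measurable_ofRange gen hgen le_sup_right) (B := 1)
    (fun i ω => by rcases hY01 i ω with hy | hy <;> simp [hy]) hYcond j h
  have hψ : ∀ x, 0 ≤ x → 0 ≤ ψ x ∧ ψ x ≤ max ψmax 0 := fun x hx => by
    rcases hx.eq_or_lt with rfl | hx
    · simp [hψ0]
    · exact ⟨(hψpos x hx).1.le, (hψpos x hx).2.trans (le_max_left _ _)⟩
  filter_upwards [hcell_mean, hNae] with ω hω hNω
  have hSN : ∀ n k, 0 ≤ S j k n ω ∧ S j k n ω ≤ N j k n ω := fun n k => by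
    rw [hS, hN]
    refine ⟨sum_nonneg fun i _ => ?_, sum_le_sum fun i _ => ?_⟩ <;>
      split_ifs <;> rcases hY01 i ω with hy | hy <;> simp [hy]
  simp only [← hS, ← hN] at hω
  simp only [hP]
  exact tendsto_urnProportion (S := fun n k => S j k n ω) (N := fun n k => N j k n ω) hψ hSN hNω
    (hω hNω)

theorem stmt9
    {Ω : Type*} [MeasurableSpace Ω] (μ : Measure Ω) [IsProbabilityMeasure μ]
    (H J : ℕ) (hH : 1 ≤ H) (hJ : 2 ≤ J)
    (Z : ℕ → Ω → Fin H) (δ : ℕ → Ω → Fin J) (Y : ℕ → Ω → ℝ)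
    (p : Fin H → ℝ)
    (hZmeas : ∀ i, Measurable (Z i)) (hδmeas : ∀ i, Measurable (δ i))
    (hYmeas : ∀ i, Measurable (Y i))
    (hY01 : ∀ i ω, Y i ω = 0 ∨ Y i ω = 1)
    (hp : ∀ h, 0 < p h)
    (𝓕 : ℕ → MeasurableSpace Ω)
    (h𝓕 : ∀ n, 𝓕 n = ⨆ i ∈ Finset.range n,
      (MeasurableSpace.comap (Z i) ⊤ ⊔ MeasurableSpace.comap (δ i) ⊤ ⊔ MeasurableSpace.comap (Y i) ⊤))
    (hZlaw : ∀ i h, μ {ω | Z i ω = h} = ENNReal.ofReal (p h))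
    (hZindep : ∀ i, Indep (MeasurableSpace.comap (Z i) ⊤) (𝓕 i) μ)
    (θ : Fin J → Fin H → ℝ)
    (hθmem : ∀ j h, θ j h ∈ Set.Ioo (0:ℝ) 1)
    (hYcond : ∀ i, μ[Y i | 𝓕 i ⊔ MeasurableSpace.comap (fun ω => (Z i ω, δ i ω)) ⊤]
        =ᵐ[μ] fun ω => θ (δ i ω) (Z i ω))
    (S N : Fin J → Fin H → ℕ → Ω → ℝ)
    (hS : ∀ j h n ω, S j h n ω = ∑ i ∈ Finset.range n, if Z i ω = h ∧ δ i ω = j then Y i ω else 0)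
    (hN : ∀ j h n ω, N j h n ω = ∑ i ∈ Finset.range n, if Z i ω = h ∧ δ i ω = j then 1 else 0)
    (θhat : Fin J → Fin H → ℕ → Ω → ℝ)
    (hθhat : ∀ j h n ω, θhat j h n ω = S j h n ω / N j h n ω)
    (ψ : ℝ → ℝ) (ψmax : ℝ)
    (hψcont : ContinuousOn ψ (Set.Ici 0)) (hψmono : MonotoneOn ψ (Set.Ici 0))
    (hψ0 : ψ 0 = 0) (hψpos : ∀ x : ℝ, 0 < x → 0 < ψ x ∧ ψ x ≤ ψmax)
    (P : Fin J → Fin H → ℕ → Ω → ℝ)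
    (hP : ∀ j h n ω,
      P j h n ω =
        if N j h n ω + ψ (∑ k ∈ Finset.univ.erase h, N j k n ω) = 0 then 1/2
        else (S j h n ω +
            ((∑ k ∈ Finset.univ.erase h, S j k n ω) / (∑ k ∈ Finset.univ.erase h, N j k n ω)) *
              ψ (∑ k ∈ Finset.univ.erase h, N j k n ω)) /
          (N j h n ω + ψ (∑ k ∈ Finset.univ.erase h, N j k n ω)))
    :
    ∀ (j : Fin J) (h : Fin H),
      (∀ᵐ ω ∂μ, Tendsto (fun n => N j h n ω) atTop atTop) →
      ∀ᵐ ω ∂μ, Tendsto (fun n => P j h n ω) atTop (nhds (θ j h)) :=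
  stmt9_general μ H J Z δ Y hZmeas hδmeas hYmeas hY01 𝓕 h𝓕 θ hYcond S N hS hN ψ ψmax hψ0 hψpos P hP
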